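/- The number of even-visiting returns to the origin grows with exponential rate 16: the sequence k ↦ (c_k)^{1/k} (with c_k viewed as a real number) tends to 16 as k → ∞; equivalently, the number of even-visiting closed walks of n = 4k steps grows like μ^n with μ = 2, the same connective constant as for unrestricted returning walks. -/

import Mathlib

/-- A walk of length `L`: a function `s : Fin (L+1) → ℤ` with `s 0 = 0` and
unit steps `|s (i+1) - s i| = 1` for all `i < L`. -/
def IsWalk (L : ℕ) (s : Fin (L + 1) → ℤ) : Prop :=
  s 0 = 0 ∧ ∀ i : Fin L, |s i.succ - s i.castSucc| = 1

/-- A closed walk: a walk that ends at the origin. -/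
def IsClosedWalk (L : ℕ) (s : Fin (L + 1) → ℤ) : Prop :=
  IsWalk L s ∧ s (Fin.last L) = 0

/-- The number of visits of the walk `s` to the site `x`. -/
def visits (L : ℕ) (s : Fin (L + 1) → ℤ) (x : ℤ) : ℕ :=
  Fintype.card {i : Fin (L + 1) // s i = x}

/-- A walk is even-visiting if every site different from `0` is visited an
even number of times. -/
def EvenVisiting (L : ℕ) (s : Fin (L + 1) → ℤ) : Prop :=
  ∀ x : ℤ, x ≠ 0 → Even (visits L s x)

/-- The up-crossing count `u(j)`: the number of indices `i < L` with
`s i = j` and `s (i+1) = j + 1`. -/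
def upcross (L : ℕ) (s : Fin (L + 1) → ℤ) (j : ℤ) : ℕ :=
  Fintype.card {i : Fin L // s i.castSucc = j ∧ s i.succ = j + 1}

/-- `c k`: the number of even-visiting closed walks of length `4 * k`. -/
noncomputable def c (k : ℕ) : ℕ :=
  Nat.card {s : Fin (4 * k + 1) → ℤ //
    IsClosedWalk (4 * k) s ∧ EvenVisiting (4 * k) s}

namespace EVAux

open Finset

/-- Building a walk from a ℕ-indexed function. -/
lemma isWalk_of_nat (L : ℕ) (g : ℕ → ℤ) (h0 : g 0 = 0)
    (hs : ∀ i < L, |g (i + 1) - g i| = 1) :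
    IsWalk L (fun i : Fin (L + 1) => g i.val) := by
  refine ⟨by simpa using h0, fun i => ?_⟩
  simpa using hs i.val i.isLt

lemma visits_of_nat (L : ℕ) (g : ℕ → ℤ) (x : ℤ) :
    visits L (fun i : Fin (L + 1) => g i.val) x
      = ((range (L + 1)).filter (fun i => g i = x)).card := by
  classical
  rw [visits, Fintype.card_subtype]
  exact Finset.card_nbij (fun i => i.val) (by intro i hi; simp only [mem_coe, mem_filter, mem_univ, true_and, mem_range] at hi ⊢; exact ⟨i.isLt, hi⟩) (fun a _ b _ h => Fin.ext h)
    (by intro b hb; simp only [mem_coe, mem_filter, mem_range] at hb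
        exact ⟨⟨b, hb.1⟩, by simp [hb.2]⟩)

/-- A walk is determined by the signs of its steps. -/
lemma walk_eq_of_steps {L : ℕ} {s s' : Fin (L + 1) → ℤ}
    (hw : IsWalk L s) (hw' : IsWalk L s')
    (h : ∀ i : Fin L, (0 < s i.succ - s i.castSucc ↔ 0 < s' i.succ - s' i.castSucc)) :
    s = s' := by
  have key : ∀ j, ∀ hj : j < L + 1, s ⟨j, hj⟩ = s' ⟨j, hj⟩ := by
    intro j
    induction j with
    | zero => intro hj; have h0 : (⟨0, hj⟩ : Fin (L+1)) = 0 := rfl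
              rw [h0, hw.1, hw'.1]
    | succ j ih =>
      intro hj
      have hjL : j < L := by omega
      have i : Fin L := ⟨j, hjL⟩
      have h1 := hw.2 ⟨j, hjL⟩
      have h2 := hw'.2 ⟨j, hjL⟩
      have h3 := h ⟨j, hjL⟩
      have e1 : (⟨j, hjL⟩ : Fin L).succ = ⟨j + 1, hj⟩ := rfl
      have e2 : (⟨j, hjL⟩ : Fin L).castSucc = ⟨j, by omega⟩ := rfl
      rw [e1, e2] at h1 h2 h3
      have ihj := ih (by omega)
      rw [ihj] at h1 h3
      rcases abs_eq (by norm_num : (0:ℤ) ≤ 1) |>.mp h1 with hd | hd <;>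
        rcases abs_eq (by norm_num : (0:ℤ) ≤ 1) |>.mp h2 with hd' | hd' <;> omega
  funext i
  have := key i.val i.isLt
  simpa using this

/-- The step-sign encoding map. -/
def stepSigns {L : ℕ} (s : Fin (L + 1) → ℤ) : Fin L → Bool :=
  fun i => decide (0 < s i.succ - s i.castSucc)

lemma stepSigns_inj {L : ℕ} {s s' : Fin (L + 1) → ℤ}
    (hw : IsWalk L s) (hw' : IsWalk L s') (h : stepSigns s = stepSigns s') : s = s' := by
  refine walk_eq_of_steps hw hw' fun i => ?_
  have := congrFun h i
  simpa [stepSigns, decide_eq_decide] using this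

instance finiteEV (L : ℕ) :
    Finite {s : Fin (L + 1) → ℤ // IsClosedWalk L s ∧ EvenVisiting L s} := by
  apply Finite.of_injective (fun s => stepSigns s.val)
  intro a b hab
  exact Subtype.ext (stepSigns_inj a.2.1.1 b.2.1.1 hab)

instance finiteCW (L : ℕ) :
    Finite {s : Fin (L + 1) → ℤ // IsClosedWalk L s} := by
  apply Finite.of_injective (fun s => stepSigns s.val)
  intro a b hab
  exact Subtype.ext (stepSigns_inj a.2.1 b.2.1 hab)

/-- Upper bound: `c k ≤ 16 ^ k`. -/
lemma c_le (k : ℕ) : c k ≤ 16 ^ k := by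
  have h := Nat.card_le_card_of_injective
    (fun (s : {s : Fin (4 * k + 1) → ℤ // IsClosedWalk (4 * k) s ∧ EvenVisiting (4 * k) s}) =>
      stepSigns s.val)
    (fun a b hab => Subtype.ext (stepSigns_inj a.2.1.1 b.2.1.1 hab))
  have h2 : Nat.card (Fin (4 * k) → Bool) = 2 ^ (4 * k) := by
    rw [Nat.card_eq_fintype_card, Fintype.card_fun]; simp
  rw [h2] at h
  calc c k ≤ 2 ^ (4 * k) := h
    _ = 16 ^ k := by rw [show (16:ℕ) = 2 ^ 4 by norm_num, ← pow_mul]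


/-- Blocks: closed walks of length `2 m`. -/
def Block (m : ℕ) := {s : Fin (2 * m + 1) → ℤ // IsClosedWalk (2 * m) s}

instance (m : ℕ) : Finite (Block m) := finiteCW (2 * m)

/-- ℕ-indexed evaluation of a block. -/
def bval {m : ℕ} (b : Block m) (j : ℕ) : ℤ :=
  if h : j < 2 * m + 1 then b.val ⟨j, h⟩ else 0

lemma bval_zero {m : ℕ} (b : Block m) : bval b 0 = 0 := by
  rw [bval, dif_pos (by omega)]
  exact b.2.1.1

lemma bval_last {m : ℕ} (b : Block m) : bval b (2 * m) = 0 := by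
  rw [bval, dif_pos (by omega)]
  exact b.2.2

lemma bval_step {m : ℕ} (b : Block m) (j : ℕ) (hj : j < 2 * m) :
    |bval b (j + 1) - bval b j| = 1 := by
  rw [bval, bval, dif_pos (by omega), dif_pos (by omega)]
  exact b.2.1.2 ⟨j, hj⟩

/-- General walk increments bound. -/
lemma abs_le_of_steps (g : ℕ → ℤ) (N : ℕ) (hs : ∀ i < N, |g (i + 1) - g i| = 1) :
    ∀ i j, i ≤ j → j ≤ N → |g j - g i| ≤ (j : ℤ) - i := by
  intro i j hij hjN
  induction j with
  | zero => interval_cases i; simp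
  | succ j ih =>
    rcases Nat.eq_or_lt_of_le hij with rfl | hlt
    · simp
    · have h1 := ih (by omega) (by omega)
      have h2 := hs j (by omega)
      have := abs_sub_abs_le_abs_sub (g (j+1) - g i) (g j - g i)
      have triangle : |g (j+1) - g i| ≤ |g j - g i| + |g (j+1) - g j| := by
        calc |g (j+1) - g i| = |(g j - g i) + (g (j+1) - g j)| := by ring_nf
          _ ≤ |g j - g i| + |g (j+1) - g j| := abs_add_le _ _
      push_cast
      push_cast at h1
      omega

lemma bval_bound {m : ℕ} (b : Block m) (j : ℕ) (hj : j ≤ 2 * m) : |bval b j| ≤ (m : ℤ) := by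
  have hsteps : ∀ i < 2 * m, |bval b (i + 1) - bval b i| = 1 := fun i hi => bval_step b i hi
  have h1 := abs_le_of_steps (bval b) (2 * m) hsteps 0 j (by omega) hj
  have h2 := abs_le_of_steps (bval b) (2 * m) hsteps j (2 * m) hj le_rfl
  rw [bval_zero] at h1
  rw [bval_last] at h2
  rw [sub_zero] at h1
  rw [zero_sub, abs_neg] at h2
  push_cast at h1 h2 ⊢
  rcases le_or_gt (j : ℤ) m with h | h
  · omega
  · omega

/-- Lower bound on the number of blocks: `centralBinom m ≤ Nat.card (Block m)`. -/
def finsetWalk {m : ℕ} (A : Finset (Fin (2 * m))) (i : ℕ) : ℤ :=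
  2 * ((A.filter (fun a : Fin (2*m) => (a : ℕ) < i)).card : ℤ) - i

lemma finsetWalk_succ {m : ℕ} (A : Finset (Fin (2 * m))) (i : ℕ) (hi : i < 2 * m) :
    finsetWalk A (i + 1) - finsetWalk A i = (if (⟨i, hi⟩ : Fin (2*m)) ∈ A then 1 else -1) := by
  classical
  have hsplit : A.filter (fun a : Fin (2*m) => (a : ℕ) < i + 1)
      = (A.filter (fun a : Fin (2*m) => (a : ℕ) < i)) ∪ (A.filter (fun a : Fin (2*m) => (a : ℕ) = i)) := by
    ext a
    simp only [mem_filter, mem_union, ← and_or_left]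
    refine and_congr_right fun _ => ?_
    omega
  have hdisj : Disjoint (A.filter (fun a : Fin (2*m) => (a : ℕ) < i)) (A.filter (fun a : Fin (2*m) => (a : ℕ) = i)) := by
    refine Finset.disjoint_left.mpr ?_
    intro a ha hb
    simp only [mem_filter] at ha hb
    exact absurd hb.2 (Nat.ne_of_lt ha.2)
  have hcard : (A.filter (fun a : Fin (2*m) => (a : ℕ) < i + 1)).card
      = (A.filter (fun a : Fin (2*m) => (a : ℕ) < i)).card + (A.filter (fun a : Fin (2*m) => (a : ℕ) = i)).card := by
    rw [hsplit, card_union_of_disjoint hdisj]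
  have hsingle : (A.filter (fun a : Fin (2*m) => (a : ℕ) = i)).card
      = if (⟨i, hi⟩ : Fin (2*m)) ∈ A then 1 else 0 := by
    by_cases h : (⟨i, hi⟩ : Fin (2*m)) ∈ A
    · rw [if_pos h, Finset.card_eq_one]
      refine ⟨⟨i, hi⟩, ?_⟩
      ext a
      simp only [mem_filter, mem_singleton]
      constructor
      · rintro ⟨_, hai⟩; exact Fin.ext hai
      · rintro rfl; exact ⟨h, rfl⟩
    · rw [if_neg h, Finset.card_eq_zero]
      ext a
      simp only [mem_filter, notMem_empty, iff_false, not_and]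
      intro ha hai
      exact h (by have : a = ⟨i, hi⟩ := Fin.ext hai; rwa [this] at ha)
  simp only [finsetWalk]
  rw [hcard, hsingle]
  split <;> push_cast <;> ring

lemma finsetWalk_isClosed {m : ℕ} (A : Finset (Fin (2 * m))) (hA : A.card = m) :
    IsClosedWalk (2 * m) (fun i : Fin (2 * m + 1) => finsetWalk A i.val) := by
  constructor
  · constructor
    · show finsetWalk A (0 : Fin (2*m+1)).val = 0
      simp [finsetWalk]
    · intro i
      show |finsetWalk A (i.succ : Fin (2*m+1)).val - finsetWalk A (i.castSucc : Fin (2*m+1)).val| = 1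
      rw [Fin.val_succ, Fin.coe_castSucc, finsetWalk_succ A i.val i.isLt]
      split <;> norm_num
  · show finsetWalk A (Fin.last (2*m)).val = 0
    rw [Fin.val_last]
    simp only [finsetWalk]
    have : A.filter (fun a : Fin (2*m) => (a : ℕ) < 2 * m) = A := by
      ext a; simp [a.isLt]
    rw [this, hA]; push_cast; ring

lemma centralBinom_le_card_block (m : ℕ) : Nat.centralBinom m ≤ Nat.card (Block m) := by
  classical
  have hinj : Function.Injective
      (fun (A : {A : Finset (Fin (2 * m)) // A.card = m}) =>
        (⟨fun i : Fin (2*m+1) => finsetWalk A.val i.val, finsetWalk_isClosed A.val A.2⟩ : Block m)) := by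
    intro A B hAB
    have heq : ∀ i : Fin (2 * m + 1), finsetWalk A.val i.val = finsetWalk B.val i.val := by
      intro i
      exact congrFun (congrArg Subtype.val hAB) i
    apply Subtype.ext
    ext a
    have h1 := finsetWalk_succ A.val a.val a.isLt
    have h2 := finsetWalk_succ B.val a.val a.isLt
    have e1 := heq ⟨a.val, by omega⟩
    have e2 := heq ⟨a.val + 1, by omega⟩
    simp only at e1 e2
    rw [e1, e2] at h1
    rw [h1] at h2
    by_cases hA : a ∈ A.val <;> by_cases hB : a ∈ B.val
    · simp [hA, hB]
    · rw [if_pos (by simpa using hA), if_neg (by simpa using hB)] at h2; norm_num at h2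
    · rw [if_neg (by simpa using hA), if_pos (by simpa using hB)] at h2; norm_num at h2
    · simp [hA, hB]
  have := Nat.card_le_card_of_injective _ hinj
  have hcard : Nat.card {A : Finset (Fin (2 * m)) // A.card = m} = Nat.centralBinom m := by
    rw [Nat.card_eq_fintype_card, Fintype.card_finset_len]
    simp [Nat.centralBinom]
  rwa [hcard] at this


end EVAux
section Part3
namespace EVAux
open Finset

/-- The concatenated walk built from `q` blocks followed by a zigzag tail. -/
def gv (m q : ℕ) (v : Fin q → Block m) (i : ℕ) : ℤ :=
  if h : i < 2 * m * q then
    bval (v ⟨i / (2 * m), by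
      have h2m : 0 < 2 * m := by
        rcases Nat.eq_zero_or_pos (2 * m) with h0 | h0
        · rw [h0, zero_mul] at h; omega
        · exact h0
      exact Nat.div_lt_of_lt_mul h⟩) (i % (2 * m))
  else ((i - 2 * m * q) % 2 : ℕ)

lemma gv_block {m q : ℕ} (v : Fin q → Block m) (t : Fin q) (j : ℕ) (hj : j < 2 * m) :
    gv m q v (2 * m * t + j) = bval (v t) j := by
  have h2m : 0 < 2 * m := by omega
  have hi : 2 * m * t + j < 2 * m * q := by
    calc 2 * m * t + j < 2 * m * t + 2 * m := by omega
      _ = 2 * m * (t + 1) := by ring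
      _ ≤ 2 * m * q := Nat.mul_le_mul_left _ (by omega)
  rw [gv, dif_pos hi]
  have hdiv : (2 * m * t + j) / (2 * m) = t := by
    rw [Nat.mul_add_div h2m, Nat.div_eq_of_lt hj, add_zero]
  have hmod : (2 * m * t + j) % (2 * m) = j := by
    rw [Nat.mul_add_mod, Nat.mod_eq_of_lt hj]
  rw [hmod]
  exact congrArg (fun z : Fin q => bval (v z) j) (Fin.ext hdiv)

lemma gv_tail {m q : ℕ} (v : Fin q → Block m) (i : ℕ) (hi : 2 * m * q ≤ i) :
    gv m q v i = ((i - 2 * m * q) % 2 : ℕ) := by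
  rw [gv, dif_neg (by omega)]

lemma gv_zero {m q : ℕ} (hm : 0 < m) (v : Fin q → Block m) : gv m q v 0 = 0 := by
  rcases Nat.eq_zero_or_pos q with hq | hq
  · rw [gv_tail v 0 (by simp [hq])]; simp
  · have := gv_block v ⟨0, hq⟩ 0 (by omega)
    simpa [bval_zero] using this

lemma gv_steps {m q n : ℕ} (hm : 0 < m) (hqn : 2 * m * q ≤ n) (v : Fin q → Block m) :
    ∀ i < n, |gv m q v (i + 1) - gv m q v i| = 1 := by
  intro i hi
  have h2m : 0 < 2 * m := by omega
  rcases lt_or_ge i (2 * m * q) with hlt | hge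
  · -- inside blocks
    set t := i / (2 * m) with ht
    set j := i % (2 * m) with hjdef
    have hdecomp : 2 * m * t + j = i := Nat.div_add_mod i (2 * m)
    have hjlt : j < 2 * m := Nat.mod_lt _ h2m
    have htq : t < q := Nat.div_lt_of_lt_mul hlt
    have hgi : gv m q v i = bval (v ⟨t, htq⟩) j := by
      rw [← hdecomp] at hlt ⊢
      exact gv_block v ⟨t, htq⟩ j hjlt
    rcases lt_or_ge (j + 1) (2 * m) with hj1 | hj1
    · have hgi1 : gv m q v (i + 1) = bval (v ⟨t, htq⟩) (j + 1) := by
        have : 2 * m * t + (j + 1) = i + 1 := by omega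
        rw [← this]
        exact gv_block v ⟨t, htq⟩ (j + 1) hj1
      rw [hgi, hgi1]
      exact bval_step _ j hjlt
    · -- block boundary
      have hj2 : j + 1 = 2 * m := by omega
      have hgi1 : gv m q v (i + 1) = 0 := by
        have hi1 : i + 1 = 2 * m * (t + 1) := by
          have hexp : 2 * m * (t+1) = 2 * m * t + 2 * m := by ring
          omega
        rcases lt_or_ge (t + 1) q with htq1 | htq1
        · have := gv_block v ⟨t + 1, htq1⟩ 0 (by omega)
          rw [add_zero] at this
          rw [hi1, this, bval_zero]
        · have hle : 2 * m * q ≤ i + 1 := by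
            rw [hi1]
            exact Nat.mul_le_mul_left _ htq1
          rw [gv_tail v _ hle]
          have hz : i + 1 - 2 * m * q = 0 := by omega
          rw [hz]; simp
      rw [hgi, hgi1]
      have := bval_step (v ⟨t, htq⟩) j hjlt
      rw [hj2, bval_last] at this
      rw [show (0:ℤ) - bval (v ⟨t, htq⟩) j = -(bval (v ⟨t, htq⟩) j - 0) by ring, abs_neg]
      simpa using this
  · -- tail
    rw [gv_tail v i hge, gv_tail v (i + 1) (by omega)]
    have ha : i + 1 - 2 * m * q = (i - 2 * m * q) + 1 := by omega
    rw [ha]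
    set a := i - 2 * m * q
    rcases Nat.mod_two_eq_zero_or_one a with h | h
    · have h1 : (a + 1) % 2 = 1 := by omega
      rw [h, h1]; norm_num
    · have h1 : (a + 1) % 2 = 0 := by omega
      rw [h, h1]; norm_num

lemma gv_end {m q n : ℕ} (hqn : 2 * m * q ≤ n) (hodd : (n - 2 * m * q) % 2 = 1)
    (v : Fin q → Block m) : gv m q v n = 1 := by
  rw [gv_tail v n hqn, hodd]; simp

lemma gv_bound {m q : ℕ} (hm : 0 < m) (v : Fin q → Block m) :
    ∀ i, |gv m q v i| ≤ (m : ℤ) := by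
  intro i
  rcases lt_or_ge i (2 * m * q) with hlt | hge
  · have h2m : 0 < 2 * m := by omega
    have hdecomp : 2 * m * (i / (2*m)) + i % (2*m) = i := Nat.div_add_mod i (2 * m)
    have htq : i / (2*m) < q := Nat.div_lt_of_lt_mul hlt
    have := gv_block v ⟨i / (2*m), htq⟩ (i % (2*m)) (Nat.mod_lt _ h2m)
    simp only [hdecomp] at this
    rw [this]
    exact bval_bound _ _ (le_of_lt (Nat.mod_lt _ h2m))
  · rw [gv_tail v i hge]
    rcases Nat.mod_two_eq_zero_or_one (i - 2 * m * q) with h | h <;> rw [h]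
    · simp
    · norm_num
      exact_mod_cast hm

/-- Recovery of the blocks from the concatenated walk. -/
lemma gv_inj {m q n : ℕ} (hm : 0 < m) (hqn : 2 * m * q ≤ n) (v v' : Fin q → Block m)
    (h : ∀ i ≤ n, gv m q v i = gv m q v' i) : v = v' := by
  funext t
  apply Subtype.ext
  funext j
  rcases lt_or_ge (j : ℕ) (2 * m) with hj | hj
  · have h1 := gv_block v t j hj
    have h2 := gv_block v' t j hj
    have hle : 2 * m * t + (j:ℕ) ≤ n := by
      have : 2 * m * (t + 1) ≤ 2 * m * q := Nat.mul_le_mul_left _ (by omega)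
      have h3 : 2 * m * t + (j:ℕ) < 2 * m * (t+1) := by
        have : 2 * m * (t+1) = 2 * m * t + 2 * m := by ring
        omega
      omega
    have := h _ hle
    rw [h1, h2] at this
    have hbv : ∀ w : Fin q → Block m, bval (w t) j = (w t).val j := by
      intro w
      rw [bval, dif_pos (by omega)]
    rw [hbv v, hbv v'] at this
    exact this
  · have hj2 : j = Fin.last (2 * m) := by
      apply Fin.ext
      simp only [Fin.val_last]
      omega
    rw [hj2, (v t).2.2, (v' t).2.2]

/-- Counting function on `[0, n]`. -/
def cnt (n : ℕ) (w : ℕ → ℤ) (y : ℤ) : ℕ := ((range (n+1)).filter (fun i => w i = y)).card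

/-- The visit-parity class of a concatenated walk. -/
def cls (m q n : ℕ) (v : Fin q → Block m) : Fin (2*m+1) → Bool :=
  fun j => decide (Odd (cnt n (gv m q v) ((j : ℤ) - m)))

lemma cnt_parity_eq {m q n : ℕ} (hm : 0 < m) {v v' : Fin q → Block m}
    (h : cls m q n v = cls m q n v') (y : ℤ) (hy : y ≠ 0) :
    Even (cnt n (gv m q v) y + cnt n (gv m q v') y) := by
  rcases le_or_gt (|y|) (m : ℤ) with hb | hb
  · have hy1 : 0 ≤ y + m := by rw [abs_le] at hb; omega
    have hy2 : (y + m).toNat < 2 * m + 1 := by rw [abs_le] at hb; omega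
    have := congrFun h ⟨(y + m).toNat, hy2⟩
    simp only [cls, decide_eq_decide] at this
    have hyy : ((((y + m).toNat : ℤ)) - m) = y := by omega
    rw [hyy] at this
    rw [Nat.even_add]
    rw [← Nat.not_odd_iff_even, ← Nat.not_odd_iff_even]
    tauto
  · have hz : ∀ (w : Fin q → Block m), cnt n (gv m q w) y = 0 := by
      intro w
      rw [cnt, Finset.card_eq_zero, Finset.filter_eq_empty_iff]
      intro i _
      intro hc
      have := gv_bound hm w i
      rw [hc] at this
      omega
    rw [hz v, hz v']
    simp

/-- The glued walk. -/
def glue (k n : ℕ) (w1 w2 : ℕ → ℤ) (i : ℕ) : ℤ :=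
  if i ≤ n then w1 i else if i = n + 1 then 0 else w2 (4 * k - i)

section Glue
variable {k n : ℕ} {w1 w2 : ℕ → ℤ}
variable (hk : 0 < k) (hn : n + 1 = 2 * k)
variable (h10 : w1 0 = 0) (h1s : ∀ i < n, |w1 (i+1) - w1 i| = 1) (h1n : |w1 n| = 1)
variable (h20 : w2 0 = 0) (h2s : ∀ i < n, |w2 (i+1) - w2 i| = 1) (h2n : |w2 n| = 1)

include hk hn h10 h1s h1n h20 h2s h2n in
lemma glue_isClosedWalk :
    IsClosedWalk (4 * k) (fun i : Fin (4 * k + 1) => glue k n w1 w2 i.val) := by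
  constructor
  · apply isWalk_of_nat
    · rw [glue, if_pos (by omega)]; exact h10
    · intro i hi
      rcases lt_or_ge i n with h | h
      · rw [glue, glue, if_pos (by omega), if_pos (by omega)]
        exact h1s i h
      rcases Nat.eq_or_lt_of_le h with rfl | h
      · -- i = n
        rw [glue, glue, if_pos le_rfl, if_neg (by omega), if_pos rfl]
        rw [show (0:ℤ) - w1 n = -(w1 n - 0) by ring, abs_neg]
        simpa using h1n
      rcases Nat.eq_or_lt_of_le (show n + 1 ≤ i by omega) with rfl | h2
      · -- i = n + 1 = 2k
        rw [glue, glue, if_neg (by omega), if_neg (by omega), if_neg (by omega), if_pos rfl]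
        have : 4 * k - (n + 1 + 1) = n := by omega
        rw [this]
        simpa using h2n
      · -- n + 2 ≤ i < 4k
        rw [glue, glue, if_neg (by omega), if_neg (by omega), if_neg (by omega), if_neg (by omega)]
        have hj : 4 * k - (i + 1) < n := by omega
        have hj2 : 4 * k - i = (4 * k - (i + 1)) + 1 := by omega
        rw [hj2]
        set j := 4 * k - (i + 1)
        rw [show w2 j - w2 (j + 1) = -(w2 (j+1) - w2 j) by ring, abs_neg]
        exact h2s j hj
  · show glue k n w1 w2 (Fin.last (4*k)).val = 0
    rw [Fin.val_last, glue, if_neg (by omega), if_neg (by omega)]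
    simp [h20]

include hn in
lemma glue_visits (y : ℤ) (hy : y ≠ 0) :
    visits (4 * k) (fun i : Fin (4 * k + 1) => glue k n w1 w2 i.val) y
      = cnt n w1 y + cnt n w2 y := by
  classical
  rw [visits_of_nat]
  have hsplit : range (4 * k + 1) = (range (2 * k) ∪ {2 * k}) ∪ Ico (2 * k + 1) (4 * k + 1) := by
    ext i
    simp only [mem_range, mem_union, mem_singleton, mem_Ico]
    omega
  have hd1 : Disjoint (range (2 * k)) ({2 * k} : Finset ℕ) := by
    rw [Finset.disjoint_left]
    intro a ha hb
    rw [mem_range] at ha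
    rw [mem_singleton] at hb
    omega
  have hd2 : Disjoint (range (2 * k) ∪ {2 * k}) (Ico (2 * k + 1) (4 * k + 1)) := by
    rw [Finset.disjoint_left]
    intro a ha hb
    simp only [mem_union, mem_range, mem_singleton] at ha
    simp only [mem_Ico] at hb
    omega
  rw [hsplit]
  rw [filter_union, card_union_of_disjoint (Finset.disjoint_filter_filter hd2)]
  rw [filter_union, card_union_of_disjoint (Finset.disjoint_filter_filter hd1)]
  have p1 : (filter (fun i => glue k n w1 w2 i = y) (range (2 * k))).card = cnt n w1 y := by
    rw [cnt, show n + 1 = 2 * k from hn]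
    congr 1
    apply filter_congr
    intro i hi
    rw [mem_range] at hi
    rw [glue, if_pos (by omega)]
  have p2 : (filter (fun i => glue k n w1 w2 i = y) ({2 * k} : Finset ℕ)).card = 0 := by
    rw [Finset.card_eq_zero, Finset.filter_eq_empty_iff]
    intro i hi
    rw [mem_singleton] at hi
    subst hi
    rw [glue, if_neg (by omega), if_pos (by omega)]
    exact fun h => hy h.symm
  have p3 : (filter (fun i => glue k n w1 w2 i = y) (Ico (2 * k + 1) (4 * k + 1))).card
      = cnt n w2 y := by
    rw [cnt]
    apply Finset.card_nbij' (fun i => 4 * k - i) (fun j => 4 * k - j)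
    · intro a ha
      simp only [mem_coe, mem_filter, mem_Ico] at ha
      simp only [mem_coe, mem_filter, mem_range]
      obtain ⟨⟨ha1, ha2⟩, hay⟩ := ha
      constructor
      · omega
      · rw [glue, if_neg (by omega), if_neg (by omega)] at hay
        exact hay
    · intro b hb
      simp only [mem_coe, mem_filter, mem_range] at hb
      simp only [mem_coe, mem_filter, mem_Ico]
      obtain ⟨hb1, hby⟩ := hb
      refine ⟨⟨by omega, by omega⟩, ?_⟩
      rw [glue, if_neg (by omega), if_neg (by omega)]
      have : 4 * k - (4 * k - b) = b := by omega
      rw [this]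
      exact hby
    · intro a ha
      simp only [mem_coe, mem_filter, mem_Ico] at ha
      beta_reduce
      omega
    · intro b hb
      simp only [mem_coe, mem_filter, mem_range] at hb
      beta_reduce
      omega
  rw [p1, p2, p3]
  omega

end Glue

/-- Pigeonhole: some fiber is large. -/
lemma pigeon {α β : Type*} [Finite α] [Finite β] [Nonempty β] (f : α → β) :
    ∃ b : β, Nat.card α ≤ Nat.card β * Nat.card {a // f a = b} := by
  classical
  letI : Fintype α := Fintype.ofFinite α
  letI : Fintype β := Fintype.ofFinite β
  obtain ⟨b, _, hb⟩ := Finset.exists_max_image Finset.univ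
    (fun b => (Finset.univ.filter (fun a => f a = b)).card) ⟨Classical.arbitrary β, Finset.mem_univ _⟩
  refine ⟨b, ?_⟩
  rw [Nat.card_eq_fintype_card, Nat.card_eq_fintype_card, Nat.card_eq_fintype_card,
    Fintype.card_subtype]
  calc Fintype.card α = Finset.univ.card := (Finset.card_univ).symm
    _ = ∑ c ∈ Finset.univ, (Finset.univ.filter (fun a => f a = c)).card :=
        Finset.card_eq_sum_card_fiberwise (fun x _ => Finset.mem_univ (f x))
    _ ≤ ∑ _c ∈ (Finset.univ : Finset β), (Finset.univ.filter (fun a => f a = b)).card :=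
        Finset.sum_le_sum (fun c _ => hb c (Finset.mem_univ c))
    _ = Fintype.card β * (Finset.univ.filter (fun a => f a = b)).card := by
        rw [Finset.sum_const, smul_eq_mul, Finset.card_univ]

end EVAux
end Part3
namespace EVAux
open Finset

theorem key (k m : ℕ) (hk : 0 < k) (hm : 0 < m) :
    16 ^ k ≤ 2 ^ (8 * m + 2) * (2 * m) ^ (2 * ((2 * k - 1) / (2 * m))) * c k := by
  classical
  set n := 2 * k - 1 with hn
  set q := n / (2 * m) with hq
  set r := n % (2 * m) with hr
  have h2m : 0 < 2 * m := by omega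
  have hdm : 2 * m * q + r = n := Nat.div_add_mod n (2 * m)
  have hrlt : r < 2 * m := Nat.mod_lt _ h2m
  have hodd : r % 2 = 1 := by
    have h2 : 2 ∣ 2 * m * q := ⟨m * q, by ring⟩
    omega
  have hqn : 2 * m * q ≤ n := by omega
  have hn1 : n + 1 = 2 * k := by omega
  -- properties of the concatenated walks
  have hw0 : ∀ v : Fin q → Block m, gv m q v 0 = 0 := fun v => gv_zero hm v
  have hws : ∀ v : Fin q → Block m, ∀ i < n, |gv m q v (i+1) - gv m q v i| = 1 :=
    fun v => gv_steps hm hqn v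
  have hwn : ∀ v : Fin q → Block m, |gv m q v n| = 1 := by
    intro v
    rw [gv_end hqn (by omega) v]
    norm_num
  -- pigeonhole
  obtain ⟨p₀, hp⟩ := pigeon (cls m q n)
  set F := Nat.card {v : Fin q → Block m // cls m q n v = p₀} with hF
  -- the injection into even-visiting closed walks
  set T := {s : Fin (4 * k + 1) → ℤ // IsClosedWalk (4 * k) s ∧ EvenVisiting (4 * k) s} with hT
  have hcT : c k = Nat.card T := rfl
  let J : {v : Fin q → Block m // cls m q n v = p₀} ×
      {v : Fin q → Block m // cls m q n v = p₀} → T :=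
    fun p => ⟨fun i => glue k n (gv m q p.1.val) (gv m q p.2.val) i.val,
      glue_isClosedWalk hk hn1 (hw0 _) (hws _) (hwn _) (hw0 _) (hws _) (hwn _),
      by
        intro y hy
        rw [glue_visits hn1 y hy]
        exact cnt_parity_eq hm (p.1.2.trans p.2.2.symm) y hy⟩
  have hJinj : Function.Injective J := by
    intro a b hab
    have hfun := congrArg Subtype.val hab
    have h1 : ∀ i ≤ n, gv m q a.1.val i = gv m q b.1.val i := by
      intro i hi
      have := congrFun hfun ⟨i, by omega⟩
      simp only [J] at this
      rw [glue, glue, if_pos (by simpa using hi), if_pos (by simpa using hi)] at this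
      simpa using this
    have h2 : ∀ i ≤ n, gv m q a.2.val i = gv m q b.2.val i := by
      intro i hi
      have := congrFun hfun ⟨4 * k - i, by omega⟩
      simp only [J] at this
      have hgt : ¬ ((⟨4 * k - i, by omega⟩ : Fin (4*k+1)).val ≤ n) := by simp; omega
      have hne : ¬ ((⟨4 * k - i, by omega⟩ : Fin (4*k+1)).val = n + 1) := by simp; omega
      rw [glue, glue, if_neg hgt, if_neg hgt, if_neg hne, if_neg hne] at this
      have hii : 4 * k - (⟨4 * k - i, by omega⟩ : Fin (4*k+1)).val = i := by simp; omega
      rw [hii] at this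
      exact this
    exact Prod.ext (Subtype.ext (gv_inj hm hqn _ _ h1)) (Subtype.ext (gv_inj hm hqn _ _ h2))
  have hJ : F * F ≤ c k := by
    have := Nat.card_le_card_of_injective J hJinj
    rw [Nat.card_prod] at this
    rw [hcT]
    exact this
  -- counting
  have hW : Nat.centralBinom m ^ q ≤ Nat.card (Fin q → Block m) := by
    have hcf : Nat.card (Fin q) = q := by
      rw [Nat.card_eq_fintype_card, Fintype.card_fin]
    rw [Nat.card_fun, hcf]
    exact Nat.pow_le_pow_left (centralBinom_le_card_block m) q
  have hC : Nat.card (Fin (2*m+1) → Bool) = 2 ^ (2*m+1) := by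
    rw [Nat.card_eq_fintype_card, Fintype.card_fun]
    simp
  have hPigeon : Nat.centralBinom m ^ q ≤ 2 ^ (2*m+1) * F := by
    calc Nat.centralBinom m ^ q ≤ Nat.card (Fin q → Block m) := hW
      _ ≤ Nat.card (Fin (2*m+1) → Bool) * F := hp
      _ = 2 ^ (2*m+1) * F := by rw [hC]
  have hCB : 2 ^ (2*m) ≤ 2 * m * Nat.centralBinom m := by
    calc 2 ^ (2*m) = 4 ^ m := by rw [show (4:ℕ) = 2^2 by norm_num, ← pow_mul, mul_comm]
      _ ≤ 2 * m * Nat.centralBinom m := Nat.four_pow_le_two_mul_self_mul_centralBinom m hm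
  have step1 : 2 ^ (2*m*q) ≤ (2*m)^q * (2^(2*m+1) * F) := by
    calc 2 ^ (2*m*q) = (2^(2*m))^q := by rw [pow_mul]
      _ ≤ (2*m*Nat.centralBinom m)^q := Nat.pow_le_pow_left hCB q
      _ = (2*m)^q * Nat.centralBinom m ^ q := mul_pow _ _ q
      _ ≤ (2*m)^q * (2^(2*m+1) * F) := Nat.mul_le_mul_left _ hPigeon
  have step2 : 2 ^ (2*m*q) * 2 ^ (2*m*q) ≤ (2*m)^(2*q) * (2^(4*m+2) * c k) := by
    calc 2 ^ (2*m*q) * 2 ^ (2*m*q)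
        ≤ ((2*m)^q * (2^(2*m+1) * F)) * ((2*m)^q * (2^(2*m+1) * F)) :=
          Nat.mul_le_mul step1 step1
      _ = (2*m)^(2*q) * (2^(4*m+2) * (F * F)) := by ring
      _ ≤ (2*m)^(2*q) * (2^(4*m+2) * c k) :=
          Nat.mul_le_mul_left _ (Nat.mul_le_mul_left _ hJ)
  calc 16 ^ k = 2 ^ (4*k) := by rw [show (16:ℕ) = 2^4 by norm_num, ← pow_mul]
    _ = (2 ^ (2*m*q) * 2 ^ (2*m*q)) * 2 ^ (2*(r+1)) := by
        rw [← pow_add, ← pow_add]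
        congr 1
        omega
    _ ≤ (2 ^ (2*m*q) * 2 ^ (2*m*q)) * 2 ^ (4*m) :=
        Nat.mul_le_mul_left _ (Nat.pow_le_pow_right (by omega) (by omega))
    _ ≤ ((2*m)^(2*q) * (2^(4*m+2) * c k)) * 2 ^ (4*m) := Nat.mul_le_mul_right _ step2
    _ = 2 ^ (8*m+2) * (2*m)^(2*q) * c k := by ring

end EVAux
namespace EVAux
open Filter Real

lemma log_le_two_sqrt {x : ℝ} (hx : 0 < x) : Real.log x ≤ 2 * Real.sqrt x := by
  have h1 : Real.log (Real.sqrt x) ≤ Real.sqrt x - 1 :=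
    Real.log_le_sub_one_of_pos (Real.sqrt_pos.mpr hx)
  have h2 : Real.log (Real.sqrt x) = Real.log x / 2 := Real.log_sqrt hx.le
  linarith

/-- The subexponential error factor. -/
def Dk (k : ℕ) : ℕ :=
  2 ^ (8 * (Nat.sqrt k + 1) + 2) *
    (2 * (Nat.sqrt k + 1)) ^ (2 * ((2 * k - 1) / (2 * (Nat.sqrt k + 1))))

lemma Dk_pos (k : ℕ) : 0 < Dk k := by
  apply Nat.mul_pos
  · exact Nat.pow_pos (by norm_num)
  · exact Nat.pow_pos (by omega)

lemma key' (k : ℕ) (hk : 1 ≤ k) : 16 ^ k ≤ Dk k * c k := by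
  have := key k (Nat.sqrt k + 1) hk (by omega)
  simpa [Dk, mul_assoc] using this

lemma logD_le (k : ℕ) (hk : 1 ≤ k) :
    Real.log (Dk k) ≤ 16 * (Real.sqrt k * Real.sqrt (Real.sqrt k)) + 16 := by
  have hk1 : (1:ℝ) ≤ (k:ℝ) := by exact_mod_cast hk
  set t := Real.sqrt (k:ℝ) with hts
  have ht1 : 1 ≤ t := by
    rw [hts, show (1:ℝ) = Real.sqrt 1 by rw [Real.sqrt_one]]
    exact Real.sqrt_le_sqrt hk1
  have ht0 : 0 < t := by linarith
  have hst : 1 ≤ Real.sqrt t := by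
    rw [show (1:ℝ) = Real.sqrt 1 by rw [Real.sqrt_one]]
    exact Real.sqrt_le_sqrt ht1
  have hst0 : 0 ≤ Real.sqrt t := by linarith
  set m := Nat.sqrt k + 1 with hm
  set q := (2 * k - 1) / (2 * m) with hq
  have hm_ub : (m:ℝ) ≤ t + 1 := by
    have h := Real.nat_sqrt_le_real_sqrt (a := k)
    rw [hm]
    push_cast
    rw [hts]
    linarith
  have hm_lb : t ≤ (m:ℝ) := by
    have hkm : k ≤ m * m := by
      have h := Nat.lt_succ_sqrt k
      rw [Nat.succ_eq_add_one] at h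
      rw [hm]
      omega
    have h1 : (k:ℝ) ≤ ((m:ℝ))^2 := by
      have h2 : (k:ℝ) ≤ (m:ℝ) * (m:ℝ) := by exact_mod_cast hkm
      nlinarith
    calc t = Real.sqrt (k:ℝ) := hts
      _ ≤ Real.sqrt (((m:ℝ))^2) := Real.sqrt_le_sqrt h1
      _ = (m:ℝ) := Real.sqrt_sq (by positivity)
  have hmpos : (0:ℝ) < (m:ℝ) := by linarith
  have hq_ub : (q:ℝ) ≤ t := by
    have h1 : ((q:ℕ):ℝ) ≤ ((2*k-1 : ℕ):ℝ) / ((2*m : ℕ):ℝ) := by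
      rw [hq]
      exact Nat.cast_div_le
    have h2 : ((2*k-1 : ℕ):ℝ) ≤ 2*(k:ℝ) := by
      have h2a : (2*k-1 : ℕ) ≤ 2*k := by omega
      calc ((2*k-1 : ℕ):ℝ) ≤ ((2*k : ℕ):ℝ) := by exact_mod_cast h2a
        _ = 2*(k:ℝ) := by push_cast; ring
    have h3 : ((2*m : ℕ):ℝ) = 2*(m:ℝ) := by push_cast; ring
    calc (q:ℝ) ≤ ((2*k-1 : ℕ):ℝ) / ((2*m : ℕ):ℝ) := h1
      _ ≤ (2*(k:ℝ)) / (2*(m:ℝ)) := by rw [h3]; gcongr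
      _ = (k:ℝ) / (m:ℝ) := by ring
      _ ≤ (k:ℝ) / t := by gcongr
      _ = t := by rw [hts]; exact Real.div_sqrt
  -- log of the two factors
  have hDk : (Dk k : ℝ) = (2:ℝ)^(8*m+2 : ℕ) * ((2*(m:ℝ)))^(2*q : ℕ) := by
    rw [Dk, ← hm, ← hq]
    push_cast
    ring
  have hlog2 : Real.log 2 ≤ 1 := by
    have := Real.log_le_sub_one_of_pos (by norm_num : (0:ℝ) < 2)
    linarith
  have hlog2m : Real.log (2*(m:ℝ)) ≤ 4 * Real.sqrt t := by
    have hb : 2*(m:ℝ) ≤ 4*t := by linarith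
    have h1 : Real.log (2*(m:ℝ)) ≤ 2 * Real.sqrt (2*(m:ℝ)) := log_le_two_sqrt (by linarith)
    have h2 : Real.sqrt (2*(m:ℝ)) ≤ Real.sqrt (4*t) := Real.sqrt_le_sqrt hb
    have h3 : Real.sqrt (4*t) = 2 * Real.sqrt t := by
      rw [show (4:ℝ)*t = (2:ℝ)^2 * t by ring, Real.sqrt_mul (by positivity),
        Real.sqrt_sq (by norm_num : (0:ℝ) ≤ 2)]
    linarith
  have hlogD : Real.log (Dk k)
      = (8*m+2 : ℕ) * Real.log 2 + (2*q : ℕ) * Real.log (2*(m:ℝ)) := by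
    rw [hDk, Real.log_mul (by positivity) (by positivity), Real.log_pow, Real.log_pow]
  have hq0 : (0:ℝ) ≤ (q:ℝ) := by positivity
  have hlog2m0 : 0 ≤ Real.log (2*(m:ℝ)) := Real.log_nonneg (by linarith)
  have hterm1 : ((8*m+2 : ℕ) : ℝ) * Real.log 2 ≤ 8*t + 10 := by
    have hc : ((8*m+2 : ℕ) : ℝ) = 8*(m:ℝ)+2 := by push_cast; ring
    rw [hc]
    have hlog20 : 0 ≤ Real.log 2 := Real.log_nonneg (by norm_num)
    have hmb : 8*(m:ℝ)+2 ≤ 8*t+10 := by linarith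
    calc (8*(m:ℝ)+2) * Real.log 2 ≤ (8*(m:ℝ)+2) * 1 := by
          apply mul_le_mul_of_nonneg_left hlog2 (by linarith)
      _ = 8*(m:ℝ)+2 := by ring
      _ ≤ 8*t+10 := hmb
  have hterm2 : ((2*q : ℕ) : ℝ) * Real.log (2*(m:ℝ)) ≤ 8 * (t * Real.sqrt t) := by
    have hc : ((2*q : ℕ) : ℝ) = 2*(q:ℝ) := by push_cast; ring
    rw [hc]
    calc 2*(q:ℝ) * Real.log (2*(m:ℝ)) ≤ 2*t * (4 * Real.sqrt t) := by
          apply mul_le_mul (by linarith) hlog2m hlog2m0 (by linarith)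
      _ = 8 * (t * Real.sqrt t) := by ring
  have htts : t ≤ t * Real.sqrt t := by nlinarith
  rw [hlogD]
  have : 8*t + 10 + 8*(t * Real.sqrt t) ≤ 16 * (t * Real.sqrt t) + 16 := by nlinarith
  linarith

lemma D_rpow_tendsto :
    Tendsto (fun k : ℕ => ((Dk k : ℝ)) ^ ((k:ℝ)⁻¹)) atTop (nhds 1) := by
  have heq : ∀ k : ℕ, ((Dk k : ℝ)) ^ ((k:ℝ)⁻¹) = Real.exp (Real.log (Dk k) * (k:ℝ)⁻¹) := by
    intro k
    rw [Real.rpow_def_of_pos (by exact_mod_cast Dk_pos k)]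
  simp only [heq]
  have h0 : Tendsto (fun k : ℕ => Real.log (Dk k) * (k:ℝ)⁻¹) atTop (nhds 0) := by
    have hup : Tendsto (fun k : ℕ => 16 * ((k:ℝ)^(-(1/4 : ℝ))) + 16 * (k:ℝ)⁻¹)
        atTop (nhds 0) := by
      have h1 : Tendsto (fun k : ℕ => (k:ℝ)^(-(1/4 : ℝ))) atTop (nhds 0) :=
        (tendsto_rpow_neg_atTop (by norm_num)).comp tendsto_natCast_atTop_atTop
      have h2 : Tendsto (fun k : ℕ => (k:ℝ)⁻¹) atTop (nhds 0) :=
        tendsto_inv_atTop_zero.comp tendsto_natCast_atTop_atTop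
      have := (h1.const_mul 16).add (h2.const_mul 16)
      simpa using this
    apply tendsto_of_tendsto_of_tendsto_of_le_of_le' tendsto_const_nhds hup
    · filter_upwards [eventually_ge_atTop 1] with k hk
      have hD1 : (1:ℝ) ≤ (Dk k : ℝ) := by exact_mod_cast Dk_pos k
      have := Real.log_nonneg hD1
      positivity
    · filter_upwards [eventually_ge_atTop 1] with k hk
      have hk0 : (0:ℝ) < (k:ℝ) := by exact_mod_cast hk
      have hlog := logD_le k hk
      have hrw : Real.sqrt (k:ℝ) * Real.sqrt (Real.sqrt (k:ℝ)) * (k:ℝ)⁻¹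
          = (k:ℝ)^(-(1/4 : ℝ)) := by
        rw [Real.sqrt_eq_rpow, Real.sqrt_eq_rpow]
        rw [← Real.rpow_mul (by positivity : (0:ℝ) ≤ (k:ℝ))]
        rw [show ((k:ℝ)⁻¹) = (k:ℝ)^(-1 : ℝ) by rw [Real.rpow_neg_one]]
        rw [← Real.rpow_add hk0, ← Real.rpow_add hk0]
        norm_num
      calc Real.log (Dk k) * (k:ℝ)⁻¹
          ≤ (16 * (Real.sqrt k * Real.sqrt (Real.sqrt k)) + 16) * (k:ℝ)⁻¹ := by
            apply mul_le_mul_of_nonneg_right hlog (by positivity)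
        _ = 16 * (Real.sqrt (k:ℝ) * Real.sqrt (Real.sqrt (k:ℝ)) * (k:ℝ)⁻¹) + 16 * (k:ℝ)⁻¹ := by
            ring
        _ = 16 * ((k:ℝ)^(-(1/4 : ℝ))) + 16 * (k:ℝ)⁻¹ := by rw [hrw]
  have := (Real.continuous_exp.tendsto 0).comp h0
  simpa [Function.comp_def] using this

end EVAux


/-- The number of even-visiting returns to the origin grows with exponential
rate `16`: the sequence `k ↦ (c k) ^ (1 / k)` tends to `16` as `k → ∞`
(equivalently, the number of even-visiting closed walks of `n = 4 k` steps grows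
like `μ ^ n` with `μ = 2`, the connective constant of unrestricted returning
walks). -/
theorem c_growth_rate :
    Filter.Tendsto (fun k : ℕ => (c k : ℝ) ^ ((k : ℝ)⁻¹))
      Filter.atTop (nhds 16) := by
  classical
  open EVAux Filter Real in
  have hLow : Tendsto (fun k : ℕ => 16 / ((Dk k : ℝ)) ^ ((k:ℝ)⁻¹)) atTop (nhds 16) := by
    have := Filter.Tendsto.div (tendsto_const_nhds (x := (16:ℝ))) D_rpow_tendsto one_ne_zero
    simpa [Pi.div_def] using this
  apply tendsto_of_tendsto_of_tendsto_of_le_of_le' hLow tendsto_const_nhds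
  · filter_upwards [Filter.eventually_ge_atTop 1] with k hk
    have hk0 : (k:ℝ) ≠ 0 := by
      have : (0:ℝ) < (k:ℝ) := by exact_mod_cast hk
      linarith
    have hD0 : (0:ℝ) < (Dk k : ℝ) := by exact_mod_cast Dk_pos k
    have h16 : ((16:ℝ))^(k:ℕ) ≤ (Dk k : ℝ) * (c k : ℝ) := by exact_mod_cast key' k hk
    have hcl : ((16:ℝ))^(k:ℕ) / (Dk k : ℝ) ≤ (c k : ℝ) := by
      rw [div_le_iff₀ hD0]
      calc ((16:ℝ))^(k:ℕ) ≤ (Dk k : ℝ) * (c k : ℝ) := h16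
        _ = (c k : ℝ) * (Dk k : ℝ) := by ring
    have hmono := Real.rpow_le_rpow (by positivity) hcl (by positivity : (0:ℝ) ≤ (k:ℝ)⁻¹)
    have hLHS : (((16:ℝ))^(k:ℕ) / (Dk k : ℝ)) ^ ((k:ℝ)⁻¹)
        = 16 / ((Dk k : ℝ)) ^ ((k:ℝ)⁻¹) := by
      rw [Real.div_rpow (by positivity) hD0.le]
      congr 1
      rw [← Real.rpow_natCast 16 k, ← Real.rpow_mul (by norm_num : (0:ℝ) ≤ 16),
        mul_inv_cancel₀ hk0, Real.rpow_one]
    rw [hLHS] at hmono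
    exact hmono
  · filter_upwards [Filter.eventually_ge_atTop 1] with k hk
    have hk0 : (k:ℝ) ≠ 0 := by
      have : (0:ℝ) < (k:ℝ) := by exact_mod_cast hk
      linarith
    have hc : (c k : ℝ) ≤ ((16:ℝ))^(k:ℕ) := by exact_mod_cast c_le k
    have := Real.rpow_le_rpow (by positivity) hc (by positivity : (0:ℝ) ≤ (k:ℝ)⁻¹)
    calc (c k : ℝ) ^ ((k:ℝ)⁻¹) ≤ (((16:ℝ))^(k:ℕ)) ^ ((k:ℝ)⁻¹) := this
      _ = 16 := by
        rw [← Real.rpow_natCast 16 k, ← Real.rpow_mul (by norm_num : (0:ℝ) ≤ 16),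
          mul_inv_cancel₀ hk0, Real.rpow_one]
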